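/- For every integer k ≥ 1, ∑_{j=1}^{∞} (−1)^{j−1}/j^k = ∑_{n=1}^{∞} H_n^{(k−1)} / (n · 2^n), where H_n^{(k)} denotes the generalized harmonic numbers; both series converge. -/

import Mathlib

/-!
Euler's series transformation. Write `D f j = f j - f (j + 1)`. Summation by parts gives
`∑ (-1)^j f j = f 0 / 2 + (∑ (-1)^j (D f) j) / 2`, so after `n` steps
`∑ (-1)^j f j = ∑_{m<n} (D^m f) 0 / 2^(m+1) + 2^(-n) ∑ (-1)^j (D^n f) j`.
For `f j = (j+1)^(-k)` all `D^n f` are nonnegative and decreasing (`f` is completely monotone,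
being a power of `1/(j+1)`), so the last alternating sum lies in `[0, f 0]` and the remainder
is `O(2^(-n))`. Finally `(D^n f) 0 = ∑_{i≤n} (-1)^i C(n,i) / (i+1)^k = H_{n+1}^{(k-1)} / (n+1)`
by Dilcher's identity `H_N^{(r)} = ∑_{j=1}^N (-1)^(j-1) C(N,j) / j^r`.
-/

open Filter

/-- The generalized harmonic numbers: `genH k n = H_n^{(k)}`, defined by `H_n^{(0)} = 1`
and `H_n^{(k)} = ∑_{j=1}^{n} H_j^{(k−1)}/j` for `k ≥ 1`. -/
noncomputable def genH : ℕ → ℕ → ℝ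
  | 0, _ => 1
  | (k+1), n => ∑ j ∈ Finset.Icc 1 n, genH k j / (j : ℝ)

open Topology Finset fwdDiff
open scoped Nat

def negFwdDiff (f : ℕ → ℝ) : ℕ → ℝ := fun j => f j - f (j + 1)

lemma negFwdDiff_eq_neg_fwdDiff (f : ℕ → ℝ) : negFwdDiff f = -Δ_[1] f := by
  ext j
  simp [negFwdDiff, fwdDiff]

lemma negFwdDiff_iter_eq_smul_fwdDiff_iter (f : ℕ → ℝ) (n : ℕ) :
    negFwdDiff^[n] f = (-1 : ℝ) ^ n • (Δ_[1])^[n] f := by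
  induction n with
  | zero => simp
  | succ n ih =>
    rw [Function.iterate_succ_apply', ih, negFwdDiff_eq_neg_fwdDiff, fwdDiff_const_smul,
      Function.iterate_succ_apply', pow_succ, mul_comm, mul_smul, neg_one_smul]

lemma negFwdDiff_iter_add (f g : ℕ → ℝ) (n : ℕ) :
    negFwdDiff^[n] (f + g) = negFwdDiff^[n] f + negFwdDiff^[n] g := by
  simp only [negFwdDiff_iter_eq_smul_fwdDiff_iter, fwdDiff_iter_add, smul_add]

lemma negFwdDiff_iter_comp_add_one (f : ℕ → ℝ) (n j : ℕ) :
    negFwdDiff^[n] (fun i => f (i + 1)) j = negFwdDiff^[n] f (j + 1) := by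
  simp only [negFwdDiff_iter_eq_smul_fwdDiff_iter, Pi.smul_apply, fwdDiff_iter_comp_add]

lemma negFwdDiff_iter_apply_zero (f : ℕ → ℝ) (n : ℕ) :
    negFwdDiff^[n] f 0 = ∑ i ∈ range (n + 1), (-1) ^ i * n.choose i * f i := by
  rw [negFwdDiff_iter_eq_smul_fwdDiff_iter, Pi.smul_apply, fwdDiff_iter_eq_sum_shift, smul_sum]
  refine sum_congr rfl fun i hi => ?_
  obtain ⟨m, rfl⟩ := Nat.exists_eq_add_of_le (Nat.lt_succ_iff.mp (mem_range.mp hi))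
  simp only [Nat.add_sub_cancel_left, zsmul_eq_mul, smul_eq_mul, zero_add, mul_one]
  push_cast
  rw [pow_add]
  linear_combination ((-1) ^ i * ((i + m).choose i : ℝ) * f i) *
    pow_mul_pow_eq_one m (by norm_num : (-1 : ℝ) * -1 = 1)

def CompletelyMonotone (f : ℕ → ℝ) : Prop := ∀ n j, 0 ≤ negFwdDiff^[n] f j

namespace CompletelyMonotone

variable {f g : ℕ → ℝ}

lemma antitone_negFwdDiff_iter (hf : CompletelyMonotone f) (n : ℕ) :
    Antitone (negFwdDiff^[n] f) :=
  antitone_nat_of_succ_le fun j => by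
    simpa [Function.iterate_succ_apply', negFwdDiff] using hf (n + 1) j

lemma negFwdDiff_iter_le (hf : CompletelyMonotone f) (n j : ℕ) : negFwdDiff^[n] f j ≤ f j := by
  induction n generalizing j with
  | zero => rfl
  | succ n ih =>
    have := hf n (j + 1)
    rw [Function.iterate_succ_apply', negFwdDiff]
    linarith [ih j]

lemma const {c : ℝ} (hc : 0 ≤ c) : CompletelyMonotone fun _ => c
  | 0, _ => hc
  | n + 1, j => by
    rw [Function.iterate_succ_apply, show negFwdDiff (fun _ => c) = 0 by ext; simp [negFwdDiff],
      Function.iterate_fixed (by ext; simp [negFwdDiff])]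
    exact le_rfl

lemma negFwdDiff_iter (hf : CompletelyMonotone f) (n : ℕ) :
    CompletelyMonotone (negFwdDiff^[n] f) :=
  fun m j => by rw [← Function.iterate_add_apply]; exact hf _ j

lemma comp_add_one (hf : CompletelyMonotone f) : CompletelyMonotone (fun j => f (j + 1)) :=
  fun n j => by simpa only [negFwdDiff_iter_comp_add_one] using hf n (j + 1)

lemma mul (hf : CompletelyMonotone f) (hg : CompletelyMonotone g) :
    CompletelyMonotone fun j => f j * g j := by
  intro n
  induction n generalizing f g with
  | zero => exact fun j => mul_nonneg (hf 0 j) (hg 0 j)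
  | succ n ih =>
    have leibniz : negFwdDiff (fun j => f j * g j) =
        (fun j => negFwdDiff f j * g j) + fun j => f (j + 1) * negFwdDiff g j := by
      ext j; simp only [negFwdDiff, Pi.add_apply]; ring
    intro j
    rw [Function.iterate_succ_apply, leibniz, negFwdDiff_iter_add]
    exact add_nonneg (ih (hf.negFwdDiff_iter 1) hg j)
      (ih hf.comp_add_one (hg.negFwdDiff_iter 1) j)

lemma pow (hf : CompletelyMonotone f) : ∀ k : ℕ, CompletelyMonotone fun j => f j ^ k
  | 0 => by simpa using const zero_le_one
  | k + 1 => by simpa only [pow_succ] using (hf.pow k).mul hf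

end CompletelyMonotone

lemma negFwdDiff_iter_inv_add_one (n j : ℕ) :
    negFwdDiff^[n] (fun i => ((i : ℝ) + 1)⁻¹) j = n ! / (j + 1).ascFactorial (n + 1) := by
  induction n generalizing j with
  | zero => simp [Nat.ascFactorial_succ]
  | succ n ih =>
    have top : ((j + 1).ascFactorial (n + 1 + 1) : ℝ)
        = (j + n + 2) * (j + 1).ascFactorial (n + 1) := by
      rw [Nat.ascFactorial_succ]; push_cast; ring
    have shift : ((j : ℝ) + 1) * (j + 1 + 1).ascFactorial (n + 1)
        = (j + n + 2) * (j + 1).ascFactorial (n + 1) := by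
      have := congrArg (Nat.cast : ℕ → ℝ) (Nat.succ_ascFactorial (j + 1) (n + 1))
      push_cast at this
      linear_combination this
    rw [Function.iterate_succ_apply', negFwdDiff, ih, ih, top, Nat.factorial_succ]
    push_cast
    field_simp
    linear_combination shift

lemma completelyMonotone_inv_add_one : CompletelyMonotone fun j => ((j : ℝ) + 1)⁻¹ :=
  fun n j => by rw [negFwdDiff_iter_inv_add_one]; positivity

lemma sum_range_neg_one_pow_mul_negFwdDiff (f : ℕ → ℝ) (N : ℕ) :
    ∑ j ∈ range N, (-1) ^ j * negFwdDiff f j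
      = 2 * ∑ j ∈ range N, (-1) ^ j * f j - f 0 + (-1) ^ N * f N := by
  induction N with
  | zero => simp
  | succ N ih =>
    rw [sum_range_succ, sum_range_succ, ih, pow_succ, negFwdDiff]
    ring

lemma tendsto_negFwdDiff_iter_nhds_zero {f : ℕ → ℝ} (h : Tendsto f atTop (𝓝 0)) (n : ℕ) :
    Tendsto (negFwdDiff^[n] f) atTop (𝓝 0) := by
  induction n with
  | zero => exact h
  | succ n ih =>
    rw [Function.iterate_succ_apply']
    have := ih.sub (ih.comp (tendsto_add_atTop_nat 1))
    rwa [sub_zero] at this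

lemma tendsto_alternating_series_negFwdDiff {f : ℕ → ℝ} {S : ℝ}
    (hS : Tendsto (fun N => ∑ j ∈ range N, (-1) ^ j * f j) atTop (𝓝 S))
    (h0 : Tendsto f atTop (𝓝 0)) :
    Tendsto (fun N => ∑ j ∈ range N, (-1) ^ j * negFwdDiff f j) atTop (𝓝 (2 * S - f 0)) := by
  have boundary : Tendsto (fun N => (-1) ^ N * f N) atTop (𝓝 0) :=
    squeeze_zero_norm (a := fun N => ‖f N‖) (fun N => by simp) (by simpa using h0.norm)
  simp_rw [sum_range_neg_one_pow_mul_negFwdDiff]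
  simpa using ((hS.const_mul 2).sub_const (f 0)).add boundary

lemma tendsto_alternating_series_negFwdDiff_iter {f : ℕ → ℝ} {S : ℝ}
    (hS : Tendsto (fun N => ∑ j ∈ range N, (-1) ^ j * f j) atTop (𝓝 S))
    (h0 : Tendsto f atTop (𝓝 0)) (n : ℕ) :
    Tendsto (fun N => ∑ j ∈ range N, (-1) ^ j * negFwdDiff^[n] f j) atTop
      (𝓝 (2 ^ n * (S - ∑ m ∈ range n, negFwdDiff^[m] f 0 / 2 ^ (m + 1)))) := by
  induction n with
  | zero => simpa using hS
  | succ n ih =>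
    convert tendsto_alternating_series_negFwdDiff ih (tendsto_negFwdDiff_iter_nhds_zero h0 n)
      using 2
    · rw [Function.iterate_succ_apply']
    · rw [sum_range_succ]
      field_simp
      ring

theorem CompletelyMonotone.hasSum_eulerTransform {f : ℕ → ℝ} {S : ℝ}
    (hf : CompletelyMonotone f) (h0 : Tendsto f atTop (𝓝 0))
    (hS : Tendsto (fun N => ∑ j ∈ range N, (-1) ^ j * f j) atTop (𝓝 S)) :
    HasSum (fun n => negFwdDiff^[n] f 0 / 2 ^ (n + 1)) S := by
  have remainder_mem_Icc (n : ℕ) :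
      2 ^ n * (S - ∑ m ∈ range n, negFwdDiff^[m] f 0 / 2 ^ (m + 1)) ∈ Set.Icc 0 (f 0) := by
    have hR := tendsto_alternating_series_negFwdDiff_iter hS h0 n
    constructor
    · simpa using (hf.antitone_negFwdDiff_iter n).alternating_series_le_tendsto hR 0
    · have hle := (hf.antitone_negFwdDiff_iter n).tendsto_le_alternating_series hR 0
      simp only [mul_zero, zero_add, sum_range_one, pow_zero, one_mul] at hle
      exact hle.trans (hf.negFwdDiff_iter_le n 0)
  have error_le (n : ℕ) :
      ‖∑ m ∈ range n, negFwdDiff^[m] f 0 / 2 ^ (m + 1) - S‖ ≤ f 0 * (1 / 2) ^ n := by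
    obtain ⟨hlo, hhi⟩ := remainder_mem_Icc n
    have h2n : (0 : ℝ) < 2 ^ n := by positivity
    rw [Real.norm_eq_abs, abs_sub_comm, abs_le, one_div_pow]
    constructor <;> (rw [← mul_le_mul_iff_of_pos_left h2n]; field_simp; nlinarith)
  refine (hasSum_iff_tendsto_nat_of_nonneg (fun n => by have := hf n 0; positivity) S).mpr ?_
  refine tendsto_iff_norm_sub_tendsto_zero.mpr (squeeze_zero (fun _ => norm_nonneg _) error_le ?_)
  simpa using (tendsto_pow_atTop_nhds_zero_of_lt_one (by norm_num : (0 : ℝ) ≤ 1 / 2)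
    (by norm_num)).const_mul (f 0)

noncomputable def altChooseSum (r N : ℕ) : ℝ :=
  ∑ i ∈ range N, (-1) ^ i * N.choose (i + 1) / ((i : ℝ) + 1) ^ r

lemma altChooseSum_zero_left {N : ℕ} (hN : N ≠ 0) : altChooseSum 0 N = 1 := by
  have h := congrArg (Int.cast : ℤ → ℝ) (Int.alternating_sum_range_choose_of_ne hN)
  push_cast at h
  rw [sum_range_succ'] at h
  simp only [altChooseSum, pow_zero, div_one]
  simp [pow_succ, sum_neg_distrib] at h
  linear_combination -h

lemma sum_range_choose_div_pow_succ (r n : ℕ) :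
    ∑ i ∈ range (n + 1), (-1) ^ i * n.choose i / ((i : ℝ) + 1) ^ (r + 1)
      = altChooseSum r (n + 1) / (n + 1) := by
  rw [altChooseSum, sum_div]
  refine sum_congr rfl fun i _ => ?_
  have h : ((n : ℝ) + 1) * n.choose i = (n + 1).choose (i + 1) * ((i : ℝ) + 1) := by
    exact_mod_cast Nat.add_one_mul_choose_eq n i
  rw [pow_succ, div_div, div_eq_div_iff (by positivity) (by positivity)]
  linear_combination ((-1) ^ i * ((i : ℝ) + 1) ^ r) * h

lemma altChooseSum_succ_succ (r N : ℕ) :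
    altChooseSum (r + 1) (N + 1) = altChooseSum (r + 1) N + altChooseSum r (N + 1) / (N + 1) := by
  have extend : altChooseSum (r + 1) N
      = ∑ i ∈ range (N + 1), (-1) ^ i * N.choose (i + 1) / ((i : ℝ) + 1) ^ (r + 1) := by
    simp [altChooseSum, sum_range_succ _ N]
  rw [extend, ← sum_range_choose_div_pow_succ, altChooseSum, ← sum_add_distrib]
  refine sum_congr rfl fun i _ => ?_
  rw [Nat.choose_succ_succ]
  push_cast
  ring

lemma altChooseSum_succ_left (r N : ℕ) :
    altChooseSum (r + 1) N = ∑ j ∈ Icc 1 N, altChooseSum r j / j := by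
  induction N with
  | zero => simp [altChooseSum]
  | succ N ih =>
    rw [sum_Icc_succ_top (by omega), ← ih, altChooseSum_succ_succ]
    push_cast
    rfl

theorem genH_eq_altChooseSum (r : ℕ) {N : ℕ} (hN : N ≠ 0) : genH r N = altChooseSum r N := by
  induction r generalizing N with
  | zero => rw [altChooseSum_zero_left hN, genH]
  | succ r ih =>
    rw [genH, altChooseSum_succ_left]
    exact sum_congr rfl fun j hj => by rw [ih (Nat.one_le_iff_ne_zero.mp (mem_Icc.mp hj).1)]

lemma negFwdDiff_iter_inv_add_one_pow_apply_zero (r n : ℕ) :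
    negFwdDiff^[n] (fun j => ((j : ℝ) + 1)⁻¹ ^ (r + 1)) 0 = genH r (n + 1) / (n + 1) := by
  rw [negFwdDiff_iter_apply_zero, genH_eq_altChooseSum r n.succ_ne_zero,
    ← sum_range_choose_div_pow_succ]
  simp only [inv_pow, div_eq_mul_inv]

/-- For every integer `k ≥ 1`,
`∑_{j=1}^{∞} (−1)^{j−1}/j^k = ∑_{n=1}^{∞} H_n^{(k−1)}/(n·2^n)`; both series converge
(the left-hand, possibly conditionally convergent, series as a limit of partial sums). -/
theorem stmt6 (k : ℕ) (hk : 1 ≤ k) :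
    Summable (fun n : ℕ => genH (k - 1) (n + 1) / (((n : ℝ) + 1) * 2 ^ (n + 1))) ∧
    Tendsto (fun N => ∑ j ∈ Finset.range N, (-1 : ℝ) ^ j / ((j : ℝ) + 1) ^ k) atTop
      (nhds (∑' n : ℕ, genH (k - 1) (n + 1) / (((n : ℝ) + 1) * 2 ^ (n + 1)))) := by
  obtain ⟨r, rfl⟩ := Nat.exists_eq_add_of_le' hk
  set a : ℕ → ℝ := fun j => ((j : ℝ) + 1)⁻¹ ^ (r + 1)
  have ha : CompletelyMonotone a := completelyMonotone_inv_add_one.pow (r + 1)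
  have ha0 : Tendsto a atTop (𝓝 0) := by
    simpa only [one_div, zero_pow r.succ_ne_zero] using
      (tendsto_one_div_add_atTop_nhds_zero_nat (𝕜 := ℝ)).pow (r + 1)
  obtain ⟨S, hS⟩ :=
    (ha.antitone_negFwdDiff_iter 0).tendsto_alternating_series_of_tendsto_zero ha0
  have euler := ha.hasSum_eulerTransform ha0 hS
  have terms : (fun n : ℕ => genH (r + 1 - 1) (n + 1) / (((n : ℝ) + 1) * 2 ^ (n + 1)))
      = fun n => negFwdDiff^[n] a 0 / 2 ^ (n + 1) := by
    ext n
    rw [negFwdDiff_iter_inv_add_one_pow_apply_zero, Nat.add_sub_cancel, div_div]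
  rw [terms, euler.tsum_eq]
  refine ⟨euler.summable, ?_⟩
  simpa [a, div_eq_mul_inv] using hS
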